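/- Let (A,B) be a NITA generated by a non-real element b_3 of degree 3 with b_3·b̄_3 = 1 + b_8 and no nontrivial basis elements of degree 1 or 2. If b_3² = c_3 + b_6 with c_3, b_6 ∈ B and c_3 ∉ {b_3, b̄_3}, then c_3·c̄_3 = 1 + b_8, there exists x_6 ∈ B of degree 6 with b̄_3·c_3 = b_3 + x_6, and moreover b_3·b_8 = x_6 + b̄_3·b_6 and c_3·b_8 = b_6 + b_3·x_6. -/

import Mathlib

/-!
Write `P = b̄₃ c₃`, `Q = c₃ c̄₃` and `j = (Q, b₈)`. Since `b₃² = c₃ + b₆`, `b₃` occurs in `P`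
exactly once, and `(P, P) = (Q, b₃ b̄₃) = 1 + j`; so `P - b₃` has nonnegative integer
coefficients, norm `j` and degree `6`, whence `j ≥ 1`. Likewise `Q - 1 - j b₈` has nonnegative
integer coefficients and degree `8 - 8 j`, whence `j ≤ 1`. Thus `j = 1`: then `Q - 1 - b₈` has
degree `0`, so `Q = 1 + b₈`, and `x₆ = P - b₃` has norm `1`, so it is a basis element. The
last two identities follow by multiplying out `b₃ b̄₃ = 1 + b₈`.
-/

/-- A normalized table algebra datum on a commutative `ℂ`-algebra `A`:
a distinguished basis `B` containing `1`, an involutive algebra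
endomorphism `bar` permuting `B`, a bilinear form for which `B` is
orthonormal and which satisfies `(a, bc) = (a·b̄, c)`, nonnegative real
structure constants, and a degree homomorphism positive on `B`. -/
structure TAData (A : Type) [CommRing A] [Algebra ℂ A] : Type where
  B : Finset A
  one_mem : (1 : A) ∈ B
  indep : LinearIndependent ℂ (fun b : {x : A // x ∈ B} => (b : A))
  span_top : Submodule.span ℂ (B : Set A) = ⊤
  bar : A →ₐ[ℂ] A
  bar_bar : ∀ a : A, bar (bar a) = a
  bar_mem : ∀ b ∈ B, bar b ∈ B
  ip : A →ₗ[ℂ] A →ₗ[ℂ] ℂ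
  ip_symm : ∀ a b : A, ip a b = ip b a
  ip_self : ∀ b ∈ B, ip b b = 1
  ip_ne : ∀ b ∈ B, ∀ c ∈ B, b ≠ c → ip b c = 0
  ip_assoc : ∀ a b c : A, ip a (b * c) = ip (a * bar b) c
  struct_nonneg : ∀ b ∈ B, ∀ c ∈ B, ∀ d ∈ B, ∃ r : ℝ, 0 ≤ r ∧ ip (b * c) d = (r : ℂ)
  deg : A →ₐ[ℂ] ℂ
  deg_pos : ∀ b ∈ B, ∃ r : ℝ, 0 < r ∧ deg b = (r : ℂ)

namespace TAData

variable {A : Type} [CommRing A] [Algebra ℂ A]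

/-- Integrality (making a table algebra a NITA): all structure constants are
nonnegative integers and all degrees are positive integers. -/
def Integral (T : TAData A) : Prop :=
  (∀ b ∈ T.B, ∀ c ∈ T.B, ∀ d ∈ T.B, ∃ n : ℕ, T.ip (b * c) d = (n : ℂ)) ∧
  (∀ b ∈ T.B, ∃ n : ℕ, 0 < n ∧ T.deg b = (n : ℂ))

/-- `L₁(B) = {1}` and `L₂(B) = ∅`: no nontrivial basis elements of degree 1 or 2. -/
def NoSmall (T : TAData A) : Prop :=
  (∀ b ∈ T.B, T.deg b = 1 → b = 1) ∧ (∀ b ∈ T.B, T.deg b ≠ 2)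

/-- The table algebra is generated (as an algebra) by `b` (and its conjugate). -/
def GeneratedBy (T : TAData A) (b : A) : Prop :=
  Algebra.adjoin ℂ ({b, T.bar b} : Set A) = ⊤

/-- A table subset of `B`: contains `1`, closed under the involution and under
supports of products. -/
def IsTableSubset (T : TAData A) (C : Set A) : Prop :=
  C ⊆ ↑T.B ∧ (1 : A) ∈ C ∧ (∀ b ∈ C, T.bar b ∈ C) ∧
    ∀ b ∈ C, ∀ c ∈ C, ∀ d ∈ T.B, T.ip (b * c) d ≠ 0 → d ∈ C

end TAData

namespace TAData

variable {A : Type} [CommRing A] [Algebra ℂ A] (T : TAData A)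

theorem sum_ip_smul (a : A) : ∑ d ∈ T.B, T.ip a d • d = a := by
  have hspan : a ∈ Submodule.span ℂ (T.B : Set A) := T.span_top ▸ Submodule.mem_top
  induction hspan using Submodule.span_induction with
  | mem x hx =>
    rw [Finset.sum_eq_single_of_mem x hx fun d hd hdx => by
      rw [T.ip_ne x hx d hd hdx.symm, zero_smul], T.ip_self x hx, one_smul]
  | zero => simp
  | add x y _ _ hx hy => simp only [map_add, LinearMap.add_apply, add_smul,
      Finset.sum_add_distrib, hx, hy]
  | smul c x _ hx => simp only [map_smul, LinearMap.smul_apply, smul_eq_mul, mul_smul,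
      ← Finset.smul_sum, hx]

theorem deg_eq_sum (a : A) : T.deg a = ∑ d ∈ T.B, T.ip a d * T.deg d := by
  conv_lhs => rw [← T.sum_ip_smul a]
  simp only [map_sum, map_smul, smul_eq_mul]

theorem ip_eq_sum (a a' : A) : T.ip a a' = ∑ d ∈ T.B, T.ip a d * T.ip a' d := by
  conv_lhs => rw [← T.sum_ip_smul a']
  simp only [map_sum, map_smul, smul_eq_mul, mul_comm]

theorem ip_mul_comm_bar (b d e : A) : T.ip (b * d) e = T.ip (T.bar b * e) d := by
  rw [T.ip_symm, T.ip_assoc, mul_comm, T.ip_symm]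

theorem ip_bar_mul_self (a c : A) :
    T.ip (T.bar a * c) (T.bar a * c) = T.ip (c * T.bar c) (a * T.bar a) := by
  rw [T.ip_assoc, T.bar_bar, T.ip_symm, show T.bar a * c * a = c * (a * T.bar a) by ring,
    T.ip_assoc]

theorem ip_sub_self {a b : A} (hb : b ∈ T.B) (h : T.ip a b = 1) :
    T.ip (a - b) (a - b) = T.ip a a - 1 := by
  simp only [map_sub, LinearMap.sub_apply, h, T.ip_symm b a, T.ip_self b hb]
  ring

theorem ip_mul_bar_self_one {c : A} (hc : c ∈ T.B) : T.ip (c * T.bar c) 1 = 1 := by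
  rw [← T.ip_assoc, mul_one, T.ip_self c hc]

open scoped ComplexOrder in
theorem deg_bar (b : A) : T.deg (T.bar b) = T.deg b := by
  have hsum : T.deg b * ∑ d ∈ T.B, T.deg d * T.deg d
      = T.deg (T.bar b) * ∑ d ∈ T.B, T.deg d * T.deg d := calc
    _ = ∑ d ∈ T.B, ∑ e ∈ T.B, T.ip (b * d) e * T.deg e * T.deg d := by
      simp only [Finset.mul_sum, ← Finset.sum_mul, ← T.deg_eq_sum, map_mul]; ring_nf
    _ = ∑ e ∈ T.B, ∑ d ∈ T.B, T.ip (T.bar b * e) d * T.deg d * T.deg e := by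
      rw [Finset.sum_comm]
      refine Finset.sum_congr rfl fun e _ => Finset.sum_congr rfl fun d _ => ?_
      rw [T.ip_mul_comm_bar]; ring
    _ = _ := by
      simp only [Finset.mul_sum, ← Finset.sum_mul, ← T.deg_eq_sum, map_mul]; ring_nf
  have hpos : 0 < ∑ d ∈ T.B, T.deg d * T.deg d := by
    refine Finset.sum_pos (fun d hd => ?_) ⟨1, T.one_mem⟩
    obtain ⟨r, hr, hdr⟩ := T.deg_pos d hd
    have : (0 : ℂ) < r := Complex.zero_lt_real.mpr hr
    rw [hdr]; exact mul_pos this this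
  exact (mul_right_cancel₀ hpos.ne' hsum).symm

def HasNatCoeffs (a : A) : Prop := ∀ d ∈ T.B, ∃ n : ℕ, T.ip a d = n

variable {T}

theorem Integral.hasNatCoeffs_mul (hInt : T.Integral) {b c : A} (hb : b ∈ T.B) (hc : c ∈ T.B) :
    T.HasNatCoeffs (b * c) :=
  hInt.1 b hb c hc

theorem HasNatCoeffs.sub_nsmul {a b : A} (ha : T.HasNatCoeffs a) (hb : b ∈ T.B) {k : ℕ}
    (hk : T.ip a b = k) : T.HasNatCoeffs (a - k • b) := by
  intro d hd
  rw [map_sub, map_nsmul, LinearMap.sub_apply, LinearMap.smul_apply, nsmul_eq_mul]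
  by_cases hbd : b = d
  · subst hbd
    exact ⟨0, by rw [hk, T.ip_self b hb]; simp⟩
  · obtain ⟨n, hn⟩ := ha d hd
    exact ⟨n, by rw [hn, T.ip_ne b hb d hd hbd, mul_zero, sub_zero]⟩

theorem HasNatCoeffs.sub {a b : A} (ha : T.HasNatCoeffs a) (hb : b ∈ T.B)
    (h : T.ip a b = 1) : T.HasNatCoeffs (a - b) := by
  simpa using ha.sub_nsmul hb (k := 1) (by simpa using h)

theorem Integral.hasNatCoeffs_mul_bar_self_sub (hInt : T.Integral) {c x : A} (hc : c ∈ T.B)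
    (hx : x ∈ T.B) (hx1 : x ≠ 1) {j : ℕ} (hj : T.ip (c * T.bar c) x = j) :
    T.HasNatCoeffs (c * T.bar c - 1 - j • x) :=
  ((hInt.hasNatCoeffs_mul hc (T.bar_mem c hc)).sub T.one_mem
    (T.ip_mul_bar_self_one hc)).sub_nsmul hx
    (by rw [map_sub, LinearMap.sub_apply, hj, T.ip_ne _ T.one_mem x hx hx1.symm, sub_zero])

theorem HasNatCoeffs.eq_zero_of_deg_eq_zero (hInt : T.Integral) {a : A}
    (ha : T.HasNatCoeffs a) (h : T.deg a = 0) : a = 0 := by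
  choose! n hn using ha
  choose! D hD using hInt.2
  have hsum : ∑ d ∈ T.B, n d * D d = 0 := by
    have := T.deg_eq_sum a
    rw [h, Finset.sum_congr rfl fun d hd => by rw [hn d hd, (hD d hd).2]] at this
    exact_mod_cast this.symm
  rw [← T.sum_ip_smul a]
  refine Finset.sum_eq_zero fun d hd => ?_
  have hnd : n d = 0 := by
    simpa [(hD d hd).1.ne'] using Finset.sum_eq_zero_iff.mp hsum d hd
  rw [hn d hd, hnd, Nat.cast_zero, zero_smul]

theorem HasNatCoeffs.exists_deg_eq_natCast (hInt : T.Integral) {a : A}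
    (ha : T.HasNatCoeffs a) : ∃ m : ℕ, T.deg a = m := by
  choose! n hn using ha
  choose! D hD using hInt.2
  refine ⟨∑ d ∈ T.B, n d * D d, ?_⟩
  rw [T.deg_eq_sum a]; push_cast
  exact Finset.sum_congr rfl fun d hd => by rw [hn d hd, (hD d hd).2]

theorem HasNatCoeffs.mem_of_ip_self_eq_one {a : A} (ha : T.HasNatCoeffs a)
    (h : T.ip a a = 1) : a ∈ T.B := by
  classical
  choose! n hn using ha
  have hsum : ∑ d ∈ T.B, n d * n d = 1 := by
    have := T.ip_eq_sum a a
    rw [h, Finset.sum_congr rfl fun d hd => by rw [hn d hd]] at this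
    exact_mod_cast this.symm
  obtain ⟨x, hx, hnx⟩ := Finset.exists_ne_zero_of_sum_ne_zero (hsum ▸ one_ne_zero)
  have hle : n x * n x ≤ 1 :=
    hsum ▸ Finset.single_le_sum (f := fun d => n d * n d) (fun d _ => Nat.zero_le _) hx
  have hnx1 : n x = 1 := by nlinarith [Nat.pos_of_ne_zero (mul_self_ne_zero.mp hnx)]
  have hrest : ∑ d ∈ T.B.erase x, n d * n d = 0 := by
    have := Finset.add_sum_erase T.B (fun d => n d * n d) hx
    simp only [hnx1] at this; omega
  have ha : a = x := by
    rw [← T.sum_ip_smul a, Finset.sum_eq_single_of_mem x hx fun d hd hdx => ?_, hn x hx, hnx1,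
      Nat.cast_one, one_smul]
    have := Finset.sum_eq_zero_iff.mp hrest d (Finset.mem_erase.mpr ⟨hdx, hd⟩)
    rw [hn d hd, mul_self_eq_zero.mp this, Nat.cast_zero, zero_smul]
  exact ha ▸ hx

theorem HasNatCoeffs.eq_zero_of_ip_self_eq_zero {a : A} (ha : T.HasNatCoeffs a)
    (h : T.ip a a = 0) : a = 0 := by
  choose! n hn using ha
  have hsum : ∑ d ∈ T.B, n d * n d = 0 := by
    have := T.ip_eq_sum a a
    rw [h, Finset.sum_congr rfl fun d hd => by rw [hn d hd]] at this
    exact_mod_cast this.symm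
  rw [← T.sum_ip_smul a]
  refine Finset.sum_eq_zero fun d hd => ?_
  rw [hn d hd, mul_self_eq_zero.mp (Finset.sum_eq_zero_iff.mp hsum d hd), Nat.cast_zero,
    zero_smul]

end TAData

theorem stmt_4_general {A : Type} [CommRing A] [Algebra ℂ A] (T : TAData A)
    (hInt : T.Integral)
    (b3 b8 c3 b6 : A)
    (hb3 : b3 ∈ T.B) (hd3 : T.deg b3 = 3)
    (hb8 : b8 ∈ T.B) (hd8 : T.deg b8 = 8)
    (hmul : b3 * T.bar b3 = 1 + b8)
    (hc3 : c3 ∈ T.B) (hdc3 : T.deg c3 = 3)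
    (hb6 : b6 ∈ T.B) (hd6 : T.deg b6 = 6)
    (hsq : b3 * b3 = c3 + b6) :
    c3 * T.bar c3 = 1 + b8 ∧
    ∃ x6 ∈ T.B, T.deg x6 = 6 ∧ T.bar b3 * c3 = b3 + x6 ∧
      b3 * b8 = x6 + T.bar b3 * b6 ∧
      c3 * b8 = b6 + b3 * x6 := by
  set P := T.bar b3 * c3 with hP
  obtain ⟨j, hj⟩ := hInt.hasNatCoeffs_mul hc3 (T.bar_mem c3 hc3) b8 hb8
  have hPb3 : T.ip P b3 = 1 := by
    rw [T.ip_mul_comm_bar, T.bar_bar, hsq, map_add, LinearMap.add_apply, T.ip_self c3 hc3,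
      T.ip_ne b6 hb6 c3 hc3 (by rintro rfl; norm_num [hdc3] at hd6), add_zero]
  have hR : T.HasNatCoeffs (P - b3) :=
    (hInt.hasNatCoeffs_mul (T.bar_mem b3 hb3) hc3).sub hb3 hPb3
  have hRR : T.ip (P - b3) (P - b3) = j := by
    rw [T.ip_sub_self hb3 hPb3, T.ip_bar_mul_self, hmul, map_add, T.ip_mul_bar_self_one hc3, hj]
    ring
  have hR_deg : T.deg (P - b3) = 6 := by
    simp only [P, map_sub, map_mul, T.deg_bar, hd3, hdc3]; norm_num
  have hQ := hInt.hasNatCoeffs_mul_bar_self_sub hc3 hb8 (by rintro rfl; norm_num at hd8) hj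
  have hQ_deg : T.deg (c3 * T.bar c3 - 1 - j • b8) = 8 - 8 * j := by
    simp only [nsmul_eq_mul, map_sub, map_mul, map_one, map_natCast, T.deg_bar, hdc3, hd8]
    ring
  have hj_one : j = 1 := by
    obtain ⟨m, hm⟩ := hQ.exists_deg_eq_natCast hInt
    have hm8 : ((m + 8 * j : ℕ) : ℂ) = (8 : ℕ) := by
      push_cast; linear_combination hm.symm.trans hQ_deg
    have hj0 : j ≠ 0 := by
      rintro rfl
      rw [hR.eq_zero_of_ip_self_eq_zero (by simpa using hRR), map_zero] at hR_deg
      norm_num at hR_deg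
    have : m + 8 * j = 8 := by exact_mod_cast hm8
    omega
  subst hj_one
  refine ⟨?_, P - b3, hR.mem_of_ip_self_eq_one (by simpa using hRR), hR_deg, by ring,
    by linear_combination hP + T.bar b3 * hsq - b3 * hmul,
    by linear_combination b3 * hP + hsq - c3 * hmul⟩
  linear_combination hQ.eq_zero_of_deg_eq_zero hInt (by simpa using hQ_deg)

/-- Lemma 4.1(2): if `b₃² = c₃ + b₆` with `c₃ ∉ {b₃, b̄₃}`,
then `c₃·c̄₃ = 1 + b₈`, `b̄₃·c₃ = b₃ + x₆` for some `x₆ ∈ B` of degree 6,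
`b₃·b₈ = x₆ + b̄₃·b₆` and `c₃·b₈ = b₆ + b₃·x₆`. -/
theorem stmt_4 {A : Type} [CommRing A] [Algebra ℂ A] (T : TAData A)
    (hInt : T.Integral) (hSmall : T.NoSmall)
    (b3 b8 c3 b6 : A)
    (hb3 : b3 ∈ T.B) (hd3 : T.deg b3 = 3) (hnr : T.bar b3 ≠ b3)
    (hgen : T.GeneratedBy b3)
    (hb8 : b8 ∈ T.B) (hd8 : T.deg b8 = 8)
    (hmul : b3 * T.bar b3 = 1 + b8)
    (hc3 : c3 ∈ T.B) (hdc3 : T.deg c3 = 3) (hc3b3 : c3 ≠ b3) (hc3b3' : c3 ≠ T.bar b3)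
    (hb6 : b6 ∈ T.B) (hd6 : T.deg b6 = 6)
    (hsq : b3 * b3 = c3 + b6) :
    c3 * T.bar c3 = 1 + b8 ∧
    ∃ x6 ∈ T.B, T.deg x6 = 6 ∧ T.bar b3 * c3 = b3 + x6 ∧
      b3 * b8 = x6 + T.bar b3 * b6 ∧
      c3 * b8 = b6 + b3 * x6 :=
  stmt_4_general T hInt b3 b8 c3 b6 hb3 hd3 hb8 hd8 hmul hc3 hdc3 hb6 hd6 hsq
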